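/- Let p = 2n+1 ≥ 7 be prime. Then the matrix B_p(n-1) = [(s_i+s_j)^{n-1}]_{2≤i,j≤n} over F_p is singular if and only if Q_p ≡ 2 (mod p²). -/

import Mathlib

/-- The companion Pell sequence: `Q 0 = 2`, `Q 1 = 2`, `Q (i+2) = 2 * Q (i+1) + Q i`. -/
def pellQ : ℕ → ℕ
  | 0 => 2
  | 1 => 2
  | (i + 2) => 2 * pellQ (i + 1) + pellQ i

/-!
Put `t = (1, s₂, …, sₙ)`; these are the `n`-th roots of unity in `𝔽_p`. The full matrix
`A = [(t_a + t_b)^(n-1)]` factors as `V E Vᵀ`, with `V` the Vandermonde matrix of `t` and `E` the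
anti-diagonal matrix of the binomial coefficients `C(n-1, k)`. Geometric sums over roots of unity
vanish, so `V⁻¹` has constant first column `1/n`, and the cofactor `B_p(n-1)` of `A` at `(0, 0)`
equals `det A · n⁻² · Σₖ C(n-1, k)⁻¹`. The classical identity
`Σ_{k ≤ m} C(m, k)⁻¹ = (m+1) / 2^(m+1) · Σ_{i ≤ m+1} 2^i / i` turns singularity into
`Σ_{i ≤ n} 2^i / i = 0` in `𝔽_p`. On the Pell side, `Q_p = 2 Σₖ C(p, 2k) 2^k` and
`C(p, j) ≡ (-1)^(j-1) p / j (mod p²)` for `0 < j < p`, so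
`Q_p ≡ 2 - p Σ_{i ≤ n} 2^i / i (mod p²)`.
-/

open Finset Matrix Function
open scoped Nat

theorem natCast_ne_zero_of_dvd {R : Type*} [Semiring R] {a b : ℕ} (h : a ∣ b)
    (hb : (b : R) ≠ 0) : (a : R) ≠ 0 := by
  obtain ⟨c, rfl⟩ := h
  exact left_ne_zero_of_mul (by rwa [← Nat.cast_mul])

theorem choose_ne_zero_of_factorial_ne_zero {R : Type*} [Semiring R] {m k : ℕ}
    (hm : (m ! : R) ≠ 0) (hk : k ≤ m) : (m.choose k : R) ≠ 0 :=
  natCast_ne_zero_of_dvd ⟨_, by rw [← mul_assoc, Nat.choose_mul_factorial_mul_factorial hk]⟩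
    hm

def binomialAntidiagonal (R : Type*) [Semiring R] (m : ℕ) :
    Matrix (Fin (m + 1)) (Fin (m + 1)) R :=
  of fun k l => if k = l.rev then (m.choose k : R) else 0

def invBinomialAntidiagonal (K : Type*) [DivisionRing K] (m : ℕ) :
    Matrix (Fin (m + 1)) (Fin (m + 1)) K :=
  of fun k l => if k = l.rev then (m.choose k : K)⁻¹ else 0

theorem of_add_pow_eq_vandermonde_mul_binomialAntidiagonal {R : Type*} [CommRing R] {m : ℕ}
    (t : Fin (m + 1) → R) :
    of (fun a b => (t a + t b) ^ m) =
      vandermonde t * binomialAntidiagonal R m * (vandermonde t)ᵀ := by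
  ext a b
  have hrow (l : Fin (m + 1)) : (vandermonde t * binomialAntidiagonal R m) a l =
      t a ^ (l.rev : ℕ) * (m.choose l.rev : R) := by
    simp [mul_apply, binomialAntidiagonal, vandermonde_apply]
  rw [of_apply, mul_apply, add_pow,
    ← Fin.sum_univ_eq_sum_range (fun k => t a ^ k * t b ^ (m - k) * (m.choose k : R))]
  refine Fintype.sum_equiv Fin.revPerm _ _ fun l => ?_
  simp only [Fin.revPerm_apply, hrow, Fin.rev_rev, transpose_apply, vandermonde_apply, Fin.val_rev]
  rw [show m + 1 - (l + 1) = m - l by omega]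
  ring

theorem binomialAntidiagonal_mul_inv {K : Type*} [Field K] {m : ℕ} (hm : (m ! : K) ≠ 0) :
    binomialAntidiagonal K m * invBinomialAntidiagonal K m = 1 := by
  ext k l
  rw [mul_apply, Finset.sum_eq_single k.rev]
  · simp only [binomialAntidiagonal, invBinomialAntidiagonal, of_apply, Fin.rev_rev, if_true,
      Fin.rev_inj, one_apply]
    split_ifs
    · rw [Fin.val_rev, show m + 1 - (k + 1) = m - k by omega, Nat.choose_symm (by omega)]
      exact mul_inv_cancel₀ (choose_ne_zero_of_factorial_ne_zero hm (by omega))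
    · exact mul_zero _
  · intro j _ hj
    rw [binomialAntidiagonal, of_apply, if_neg (by rintro rfl; simp at hj), zero_mul]
  · simp

theorem vandermonde_mulVec_const_eq_single {K : Type*} [Field K] {m : ℕ} (t : Fin (m + 1) → K)
    (ht : Injective t) (ht0 : t 0 = 1) (hroot : ∀ a, t a ^ (m + 1) = 1)
    (hm : ((m + 1 : ℕ) : K) ≠ 0) :
    vandermonde t *ᵥ (fun _ => ((m + 1 : ℕ) : K)⁻¹) = Pi.single 0 1 := by
  ext a
  have hgeom : ∑ k : Fin (m + 1), t a ^ (k : ℕ) = if a = 0 then ((m + 1 : ℕ) : K) else 0 := by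
    rw [Fin.sum_univ_eq_sum_range (t a ^ ·)]
    split_ifs with ha
    · simp [ha, ht0]
    · have hne : t a ≠ 1 := ht0 ▸ ht.ne ha
      rw [geom_sum_eq hne, hroot, sub_self, zero_div]
  simp only [mulVec, dotProduct, vandermonde_apply, ← Finset.sum_mul, hgeom, Pi.single_apply]
  split_ifs
  · exact mul_inv_cancel₀ hm
  · exact zero_mul _

theorem vandermonde_inv_apply_zero {K : Type*} [Field K] {m : ℕ} (t : Fin (m + 1) → K)
    (ht : Injective t) (ht0 : t 0 = 1) (hroot : ∀ a, t a ^ (m + 1) = 1)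
    (hm : ((m + 1 : ℕ) : K) ≠ 0) (k : Fin (m + 1)) :
    (vandermonde t)⁻¹ k 0 = ((m + 1 : ℕ) : K)⁻¹ := by
  have : Invertible (vandermonde t) :=
    invertibleOfIsUnitDet _ (det_vandermonde_ne_zero_iff.mpr ht).isUnit
  have h := inv_mulVec_eq_vec (vandermonde_mulVec_const_eq_single t ht ht0 hroot hm).symm
  rw [mulVec_single_one] at h
  exact congrFun h k

theorem det_of_add_pow_eq_zero_iff {K : Type*} [Field K] {m : ℕ} (x : Fin m → K)
    (hx : Injective (Fin.cons 1 x : Fin (m + 1) → K)) (hroot : ∀ i, x i ^ (m + 1) = 1)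
    (hfact : ((m + 1)! : K) ≠ 0) :
    (of fun i j => (x i + x j) ^ m).det = 0 ↔
      ∑ k ∈ range (m + 1), (m.choose k : K)⁻¹ = 0 := by
  set t : Fin (m + 1) → K := Fin.cons 1 x
  have htroot : ∀ a, t a ^ (m + 1) = 1 := Fin.cases (one_pow _) hroot
  have hm1 : ((m + 1 : ℕ) : K) ≠ 0 :=
    natCast_ne_zero_of_dvd (Nat.dvd_factorial m.succ_pos le_rfl) hfact
  have hm : (m ! : K) ≠ 0 := natCast_ne_zero_of_dvd (Nat.factorial_dvd_factorial m.le_succ) hfact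
  set A : Matrix (Fin (m + 1)) (Fin (m + 1)) K := of fun a b => (t a + t b) ^ m
  have hA : A = _ := of_add_pow_eq_vandermonde_mul_binomialAntidiagonal t
  have hE := binomialAntidiagonal_mul_inv hm
  have hdetA : A.det ≠ 0 := by
    rw [hA, det_mul, det_mul, det_transpose]
    exact mul_ne_zero (mul_ne_zero (det_vandermonde_ne_zero_iff.mpr hx)
      (isUnit_det_of_right_inverse hE).ne_zero) (det_vandermonde_ne_zero_iff.mpr hx)
  have hminor : (of fun i j => (x i + x j) ^ m).det = A.det * A⁻¹ 0 0 := by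
    rw [Matrix.inv_def, Matrix.smul_apply, smul_eq_mul, Ring.inverse_eq_inv',
      mul_inv_cancel_left₀ hdetA, adjugate_fin_succ_eq_det_submatrix]
    simp only [Fin.succAbove_zero, Fin.val_zero, add_zero, pow_zero, one_mul]
    rfl
  have hinv : A⁻¹ 0 0 =
      (((m + 1 : ℕ) : K) ^ 2)⁻¹ * ∑ k ∈ range (m + 1), (m.choose k : K)⁻¹ := by
    rw [hA, Matrix.mul_inv_rev, Matrix.mul_inv_rev, inv_eq_right_inv hE, ← transpose_nonsing_inv]
    simp only [mul_apply, transpose_apply, vandermonde_inv_apply_zero t hx rfl htroot hm1]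
    have hrow (k : Fin (m + 1)) :
        ∑ l, invBinomialAntidiagonal K m k l = (m.choose k : K)⁻¹ := by
      simp [invBinomialAntidiagonal, ← Fin.rev_eq_iff]
    simp only [← Finset.sum_mul, ← Finset.mul_sum, hrow,
      Fin.sum_univ_eq_sum_range (fun k => (m.choose k : K)⁻¹)]
    ring
  rw [hminor, hinv, mul_eq_zero, mul_eq_zero, or_iff_right hdetA,
    or_iff_right (by simpa using hm1)]

section InverseBinomialSums

variable {K : Type*} [Field K]

theorem inv_choose_add_inv_choose_succ {m k : ℕ} (hk : k ≤ m) (hfact : ((m + 1)! : K) ≠ 0) :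
    ((m + 1).choose k : K)⁻¹ + ((m + 1).choose (k + 1) : K)⁻¹ =
      (m + 2) / (m + 1) * (m.choose k : K)⁻¹ := by
  have hm : (m ! : K) ≠ 0 := natCast_ne_zero_of_dvd (Nat.factorial_dvd_factorial m.le_succ) hfact
  have h₁ := choose_ne_zero_of_factorial_ne_zero hfact (k := k) (by omega)
  have h₂ := choose_ne_zero_of_factorial_ne_zero hfact (k := k + 1) (by omega)
  have h₃ := choose_ne_zero_of_factorial_ne_zero hm hk
  have hm1 : ((m + 1 : ℕ) : K) ≠ 0 :=
    natCast_ne_zero_of_dvd (Nat.dvd_factorial m.succ_pos le_rfl) hfact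
  have e₁ := congrArg (Nat.cast : ℕ → K) (Nat.choose_mul_succ_eq m k)
  have e₂ := congrArg (Nat.cast : ℕ → K) (Nat.add_one_mul_choose_eq m k)
  push_cast [Nat.sub_add_comm hk, Nat.cast_sub hk] at e₁ e₂ hm1
  field_simp
  linear_combination ((m + 1).choose (k + 1) : K) * e₁ + ((m + 1).choose k : K) * e₂

theorem two_mul_sum_inv_choose_succ {m : ℕ} (hfact : ((m + 1)! : K) ≠ 0) :
    2 * ∑ k ∈ range (m + 2), ((m + 1).choose k : K)⁻¹ =
      2 + (m + 2) / (m + 1) * ∑ k ∈ range (m + 1), (m.choose k : K)⁻¹ := by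
  set f : ℕ → K := fun k => ((m + 1).choose k : K)⁻¹
  have hpair : ∑ k ∈ range (m + 1), (f k + f (k + 1)) =
      (m + 2) / (m + 1) * ∑ k ∈ range (m + 1), (m.choose k : K)⁻¹ := by
    rw [mul_sum]
    exact sum_congr rfl fun k hk =>
      inv_choose_add_inv_choose_succ (Nat.lt_succ_iff.mp (mem_range.mp hk)) hfact
  have hlast : f (m + 1) = 1 := by simp [f]
  have hfirst : f 0 = 1 := by simp [f]
  rw [sum_add_distrib] at hpair
  linear_combination sum_range_succ f (m + 1) + sum_range_succ' f (m + 1) + hpair + hlast + hfirst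

theorem two_pow_mul_sum_inv_choose {m : ℕ} (hfact : ((m + 1)! : K) ≠ 0) :
    2 ^ (m + 1) * ∑ k ∈ range (m + 1), (m.choose k : K)⁻¹ =
      (m + 1) * ∑ i ∈ range (m + 1), (2 : K) ^ (i + 1) / (i + 1) := by
  induction m with
  | zero => simp
  | succ m ih =>
    have hfact' : ((m + 1)! : K) ≠ 0 :=
      natCast_ne_zero_of_dvd (Nat.factorial_dvd_factorial (m + 1).le_succ) hfact
    have hm1 : ((m + 1 : ℕ) : K) ≠ 0 :=
      natCast_ne_zero_of_dvd (Nat.dvd_factorial m.succ_pos le_rfl) hfact'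
    have hm2 : ((m + 1 + 1 : ℕ) : K) ≠ 0 :=
      natCast_ne_zero_of_dvd (Nat.dvd_factorial (m + 1).succ_pos le_rfl) hfact
    rw [sum_range_succ (fun i : ℕ => (2 : K) ^ (i + 1) / (i + 1)), pow_succ, mul_assoc,
      two_mul_sum_inv_choose_succ hfact']
    have ih := ih hfact'
    set S := ∑ k ∈ range (m + 1), (m.choose k : K)⁻¹
    set H := ∑ i ∈ range (m + 1), (2 : K) ^ (i + 1) / (i + 1)
    push_cast at hm1 hm2 ⊢
    field_simp
    linear_combination ((m : K) + 2) * ih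

end InverseBinomialSums

theorem ZMod.natCast_ne_zero_of_lt {p a : ℕ} (ha : 0 < a) (hap : a < p) : (a : ZMod p) ≠ 0 := by
  rw [Ne, ZMod.natCast_eq_zero_iff]
  exact Nat.not_dvd_of_pos_of_lt ha hap

theorem ZMod.natCast_choose_pred_prime {p k : ℕ} [Fact p.Prime] (hk : k < p) :
    ((p - 1).choose k : ZMod p) = (-1) ^ k := by
  have hfact : (k ! : ZMod p) ≠ 0 :=
    ((IsUnit.natCast_factorial_iff_of_charP (A := ZMod p) p).mpr hk).ne_zero
  have h := ZMod.cast_descFactorial (p := p) hk.le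
  rw [Nat.descFactorial_eq_factorial_mul_choose, Nat.cast_mul, mul_comm ((-1 : ZMod p) ^ k)] at h
  exact mul_left_cancel₀ hfact h

theorem ZMod.natCast_choose_div_prime_mul {p j : ℕ} [hp : Fact p.Prime] (hj₀ : 0 < j)
    (hjp : j < p) :
    ((p.choose j / p : ℕ) : ZMod p) * j = (-1) ^ (j - 1) := by
  have hdvd : p ∣ p.choose j := hp.out.dvd_choose_self hj₀.ne' hjp
  have h := Nat.add_one_mul_choose_eq (p - 1) (j - 1)
  rw [Nat.sub_add_cancel hp.out.one_le, Nat.sub_add_cancel hj₀, ← Nat.mul_div_cancel' hdvd,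
    mul_assoc] at h
  rw [← ZMod.natCast_choose_pred_prime (by omega : j - 1 < p),
    Nat.eq_of_mul_eq_mul_left hp.out.pos h, Nat.cast_mul]

-- `(1 + √2) ^ i = pellEven i + pellOdd i * √2`
def pellEven (i : ℕ) : ℕ := ∑ k ∈ range (i + 1), i.choose (2 * k) * 2 ^ k

def pellOdd (i : ℕ) : ℕ := ∑ k ∈ range (i + 1), i.choose (2 * k + 1) * 2 ^ k

theorem pellEven_succ (i : ℕ) : pellEven (i + 1) = pellEven i + 2 * pellOdd i := by
  have hpascal (k : ℕ) : (i + 1).choose (2 * (k + 1)) * 2 ^ (k + 1) =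
      2 * (i.choose (2 * k + 1) * 2 ^ k) + i.choose (2 * (k + 1)) * 2 ^ (k + 1) := by
    rw [show 2 * (k + 1) = 2 * k + 1 + 1 by ring, Nat.choose_succ_succ']
    ring
  have hE : pellEven i = ∑ k ∈ range (i + 1), i.choose (2 * (k + 1)) * 2 ^ (k + 1) + 1 := by
    rw [pellEven, sum_range_succ', sum_range_succ,
      Nat.choose_eq_zero_of_lt (by omega : i < 2 * (i + 1))]
    simp
  rw [pellEven, sum_range_succ', sum_congr rfl fun k _ => hpascal k, sum_add_distrib, ← mul_sum,
    hE, pellOdd]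
  simp only [mul_zero, Nat.choose_zero_right, pow_zero, mul_one]
  ring

theorem pellOdd_succ (i : ℕ) : pellOdd (i + 1) = pellEven i + pellOdd i := by
  have hE : ∑ k ∈ range (i + 2), i.choose (2 * k) * 2 ^ k = pellEven i := by
    rw [sum_range_succ, Nat.choose_eq_zero_of_lt (by omega : i < 2 * (i + 1)), zero_mul, add_zero,
      pellEven]
  have hO : ∑ k ∈ range (i + 2), i.choose (2 * k + 1) * 2 ^ k = pellOdd i := by
    rw [sum_range_succ, Nat.choose_eq_zero_of_lt (by omega : i < 2 * (i + 1) + 1), zero_mul,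
      add_zero, pellOdd]
  rw [pellOdd, sum_congr rfl fun k _ => by rw [Nat.choose_succ_succ', add_mul], sum_add_distrib,
    hE, hO]

theorem pellEven_add_two (i : ℕ) : pellEven (i + 2) = 2 * pellEven (i + 1) + pellEven i := by
  have h₁ : pellEven (i + 2) = pellEven (i + 1) + 2 * pellOdd (i + 1) := pellEven_succ (i + 1)
  have h₂ := pellEven_succ i
  have h₃ := pellOdd_succ i
  omega

theorem pellQ_eq_two_mul_pellEven : ∀ i, pellQ i = 2 * pellEven i
  | 0 => rfl
  | 1 => rfl
  | i + 2 => by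
    rw [pellQ, pellQ_eq_two_mul_pellEven (i + 1), pellQ_eq_two_mul_pellEven i, pellEven_add_two]
    ring

theorem pellQ_prime_modEq_two_iff {p n : ℕ} [hp : Fact p.Prime] (hpn : p = 2 * n + 1) :
    (pellQ p : ℤ) ≡ 2 [ZMOD p ^ 2] ↔
      ∑ i ∈ range n, (2 : ZMod p) ^ (i + 1) / (i + 1) = 0 := by
  set T : ℕ := ∑ k ∈ range n, p.choose (2 * k + 2) / p * 2 ^ (k + 1)
  have hEven : pellEven p = 1 + p * T := by
    have htrunc : pellEven p = ∑ k ∈ range (n + 1), p.choose (2 * k) * 2 ^ k :=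
      (sum_subset (f := fun k => p.choose (2 * k) * 2 ^ k) (range_subset_range.mpr (by omega))
        fun k _ hk => by
        rw [Nat.choose_eq_zero_of_lt (by simp at hk; omega), zero_mul]).symm
    rw [htrunc, sum_range_succ', mul_sum, add_comm]
    congr 1
    · simp
    refine sum_congr rfl fun k hk => ?_
    have hdvd : p ∣ p.choose (2 * k + 2) :=
      hp.out.dvd_choose_self (by omega) (by simp at hk; omega)
    rw [← mul_assoc, Nat.mul_div_cancel' hdvd, mul_add_one]
  have hc (k : ℕ) (hk : k ∈ range n) :
      ((p.choose (2 * k + 2) / p : ℕ) : ZMod p) = -((2 * k + 2 : ℕ) : ZMod p)⁻¹ := by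
    have h := ZMod.natCast_choose_div_prime_mul (p := p) (j := 2 * k + 2) (by omega)
      (by simp at hk; omega)
    rw [show 2 * k + 2 - 1 = 2 * k + 1 by omega, Odd.neg_one_pow ⟨k, rfl⟩] at h
    have hj : ((2 * k + 2 : ℕ) : ZMod p) ≠ 0 :=
      right_ne_zero_of_mul (h ▸ neg_ne_zero.mpr one_ne_zero)
    field_simp
    linear_combination h
  have hT : (T : ZMod p) = -2⁻¹ * ∑ i ∈ range n, (2 : ZMod p) ^ (i + 1) / (i + 1) := by
    rw [Nat.cast_sum, mul_sum]
    refine sum_congr rfl fun k hk => ?_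
    rw [Nat.cast_mul, hc k hk]
    push_cast
    rw [show (2 * k + 2 : ZMod p) = 2 * (k + 1) by ring, mul_inv]
    ring
  have h2 : (2 : ZMod p) ≠ 0 := by
    have := hp.out.two_le
    exact_mod_cast ZMod.natCast_ne_zero_of_lt (p := p) two_pos (by omega)
  have hQ : (pellQ p : ℤ) - 2 = p * (2 * T) := by
    rw [pellQ_eq_two_mul_pellEven, hEven]
    push_cast
    ring
  calc (pellQ p : ℤ) ≡ 2 [ZMOD p ^ 2] ↔ (p : ℤ) * p ∣ p * (2 * T) := by
        rw [Int.modEq_comm, Int.modEq_iff_dvd, hQ, sq]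
    _ ↔ (p : ℤ) ∣ 2 * T := mul_dvd_mul_iff_left (by exact_mod_cast hp.out.ne_zero)
    _ ↔ (((2 * T : ℤ)) : ZMod p) = 0 := (ZMod.intCast_zmod_eq_zero_iff_dvd _ _).symm
    _ ↔ ∑ i ∈ range n, (2 : ZMod p) ^ (i + 1) / (i + 1) = 0 := by
        push_cast
        rw [hT]
        simp [h2]

theorem B_p_n_sub_one_singular_iff_general (p n : ℕ) [hp : Fact p.Prime] (hpn : p = 2 * n + 1)
    (s : Fin (n - 1) → ZMod p) (hinj : Function.Injective s)
    (hrange : ∀ x : ZMod p, (∃ i, s i = x) ↔ (IsSquare x ∧ x ≠ 0 ∧ x ≠ 1)) :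
    (Matrix.of fun i j : Fin (n - 1) => (s i + s j) ^ (n - 1)).det = 0 ↔
      (pellQ p : ℤ) ≡ 2 [ZMOD (p : ℤ) ^ 2] := by
  have hn : 1 ≤ n := by have := hp.out.two_le; omega
  have hfact : (((n - 1) + 1)! : ZMod p) ≠ 0 :=
    ((IsUnit.natCast_factorial_iff_of_charP p).mpr (by omega)).ne_zero
  have hs (i : Fin (n - 1)) : IsSquare (s i) ∧ s i ≠ 0 ∧ s i ≠ 1 :=
    (hrange _).mp ⟨i, rfl⟩
  have hcons : Injective (Fin.cons 1 s : Fin (n - 1 + 1) → ZMod p) :=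
    Fin.cons_injective_iff.mpr ⟨fun ⟨i, hi⟩ => (hs i).2.2 hi, hinj⟩
  have hroot (i : Fin (n - 1)) : s i ^ (n - 1 + 1) = 1 := by
    obtain ⟨y, hy⟩ := (hs i).1
    have hy0 : y ≠ 0 := by rintro rfl; exact (hs i).2.1 (by simp [hy])
    rw [hy, ← sq, ← pow_mul, show 2 * (n - 1 + 1) = p - 1 by omega,
      ZMod.pow_card_sub_one_eq_one hy0]
  have h2 : (2 : ZMod p) ≠ 0 := by
    exact_mod_cast ZMod.natCast_ne_zero_of_lt (p := p) two_pos (by omega)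
  have hn0 : ((n - 1 : ℕ) : ZMod p) + 1 ≠ 0 := by
    exact_mod_cast ZMod.natCast_ne_zero_of_lt (p := p) (a := n - 1 + 1) (by omega) (by omega)
  have hsum := two_pow_mul_sum_inv_choose hfact
  rw [det_of_add_pow_eq_zero_iff s hcons hroot hfact, pellQ_prime_modEq_two_iff hpn,
    ← mul_eq_zero_iff_left (pow_ne_zero _ h2), hsum, mul_eq_zero_iff_left hn0,
    Nat.sub_add_cancel hn]

theorem B_p_n_sub_one_singular_iff (p n : ℕ) [hp : Fact p.Prime] (hpn : p = 2 * n + 1)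
    (h7 : 7 ≤ p)
    (s : Fin (n - 1) → ZMod p) (hinj : Function.Injective s)
    (hrange : ∀ x : ZMod p, (∃ i, s i = x) ↔ (IsSquare x ∧ x ≠ 0 ∧ x ≠ 1)) :
    (Matrix.of fun i j : Fin (n - 1) => (s i + s j) ^ (n - 1)).det = 0 ↔
      (pellQ p : ℤ) ≡ 2 [ZMOD (p : ℤ) ^ 2] :=
  B_p_n_sub_one_singular_iff_general p n (hp := hp) hpn s hinj hrange
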